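/- arXiv:math/0111223 — 8 statements merged into one kernel-verified Lean document; each statement's English description precedes it below -/
import Mathlib

section
/- Let f : X → Y be a continuous map between Hausdorff, second-countable, locally compact topological spaces. If C ⊆ Y is compact and C ∩ L(f) = ∅, then f⁻¹(C) is compact. -/
open Filter Topology Set

/-- The limit set `L(f)` of a map `f : X → Y`: the set of `y ∈ Y` for which there is a
sequence in `X` with no cluster points in `X` whose image under `f` converges to `y`. -/
def limitSet {X Y : Type*} [TopologicalSpace X] [TopologicalSpace Y] (f : X → Y) : Set Y :=
  {y | ∃ u : ℕ → X, (∀ p : X, ¬ MapClusterPt p Filter.atTop u) ∧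
    Filter.Tendsto (fun n => f (u n)) Filter.atTop (nhds y)}

/-- If `C ⊆ Y` is compact and `C ∩ L(f) = ∅`, then `f⁻¹(C)` is compact. -/
theorem limitSet_compact_preimage
    {X Y : Type*} [TopologicalSpace X] [T2Space X] [SecondCountableTopology X]
    [LocallyCompactSpace X]
    [TopologicalSpace Y] [T2Space Y] [SecondCountableTopology Y] [LocallyCompactSpace Y]
    (f : X → Y) (hf : Continuous f) (C : Set Y) (hC : IsCompact C)
    (hdisj : C ∩ limitSet f = ∅) :
    IsCompact (f ⁻¹' C) := by
  letI : MetricSpace X := TopologicalSpace.metrizableSpaceMetric X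
  have hseq : IsSeqCompact (f ⁻¹' C) := by
    intro u hu
    -- f ∘ u lives in C, compact, so a subsequence converges to some y ∈ C
    obtain ⟨y, hyC, φ, hφ, hfy⟩ := hC.tendsto_subseq (x := fun n => f (u n)) hu
    -- y ∉ limitSet f, so u ∘ φ has a cluster point p
    have hy : y ∉ limitSet f := fun h =>
      (Set.eq_empty_iff_forall_notMem.mp hdisj y) ⟨hyC, h⟩
    have : ¬ (∀ p : X, ¬ MapClusterPt p Filter.atTop (u ∘ φ)) := by
      intro h
      exact hy ⟨u ∘ φ, h, hfy⟩
    push_neg at this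
    obtain ⟨p, hp⟩ := this
    obtain ⟨ψ, hψ, hup⟩ := TopologicalSpace.FirstCountableTopology.tendsto_subseq hp
    refine ⟨p, ?_, φ ∘ ψ, hφ.comp hψ, hup⟩
    have h1 : Filter.Tendsto (fun n => f (u (φ (ψ n)))) Filter.atTop (nhds (f p)) :=
      (hf.tendsto p).comp hup
    have h2 : Filter.Tendsto (fun n => f (u (φ (ψ n)))) Filter.atTop (nhds y) :=
      hfy.comp hψ.tendsto_atTop
    have : f p = y := tendsto_nhds_unique h1 h2
    simpa [Set.mem_preimage, this] using hyC
  exact hseq.isCompact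
end

section
/- Let f : X → Y be a continuous map between Hausdorff, second-countable, locally compact topological spaces. If X = X₁ ∪ X₂, then L(f) ⊆ L(f|X₁) ∪ L(f|X₂); moreover, if X₁ and X₂ are both closed in X, then L(f) = L(f|X₁) ∪ L(f|X₂). -/
open Filter Topology Set

/-! A sequence in `X` that escapes to infinity and visits `S` infinitely often gives, by passing
to the visiting subsequence, a sequence in `S` that escapes to infinity in `S`. For closed `S`
the converse holds: a sequence in `S` cannot accumulate in `X` outside `S`, so escaping in `S`
means escaping in `X`. -/

section

variable {X Y : Type*} [TopologicalSpace X] [TopologicalSpace Y]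

theorem mem_limitSet_comp_val_of_frequently (f : X → Y) {S : Set X} {u : ℕ → X} {y : Y}
    (hu : ∀ p : X, ¬ MapClusterPt p atTop u) (hy : Tendsto (fun n => f (u n)) atTop (𝓝 y))
    (hS : ∃ᶠ n in atTop, u n ∈ S) : y ∈ limitSet (f ∘ (↑) : S → Y) := by
  obtain ⟨φ, hφ, hφS⟩ := extraction_of_frequently_atTop hS
  refine ⟨fun n => ⟨u (φ n), hφS n⟩, fun p hp => hu p ?_, hy.comp hφ.tendsto_atTop⟩
  exact (hp.continuousAt_comp continuous_subtype_val.continuousAt).of_comp hφ.tendsto_atTop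

theorem limitSet_subset_union (f : X → Y) {X₁ X₂ : Set X} (hcover : X₁ ∪ X₂ = univ) :
    limitSet f ⊆ limitSet (f ∘ (↑) : X₁ → Y) ∪ limitSet (f ∘ (↑) : X₂ → Y) := by
  rintro y ⟨u, hu, hy⟩
  have hvisits : ∃ᶠ n in atTop, u n ∈ X₁ ∨ u n ∈ X₂ :=
    Frequently.of_forall fun n => hcover.ge (mem_univ (u n))
  exact (frequently_or_distrib.1 hvisits).imp (mem_limitSet_comp_val_of_frequently f hu hy)
    (mem_limitSet_comp_val_of_frequently f hu hy)

theorem limitSet_comp_subset_of_isClosedEmbedding {Z : Type*} [TopologicalSpace Z] (f : X → Y)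
    {g : Z → X} (hg : IsClosedEmbedding g) : limitSet (f ∘ g) ⊆ limitSet f := by
  rintro y ⟨u, hu, hy⟩
  refine ⟨g ∘ u, fun p hp => ?_, hy⟩
  obtain ⟨q, rfl⟩ : p ∈ range g :=
    hg.isClosed_range.mem_of_mapClusterPt hp (Eventually.of_forall fun n => mem_range_self (u n))
  exact hu q (hg.isInducing.mapClusterPt_iff.1 hp)

end

theorem limitSet_union_general
    {X Y : Type*} [TopologicalSpace X]
    [TopologicalSpace Y]
    (f : X → Y) (X₁ X₂ : Set X) (hcover : X₁ ∪ X₂ = Set.univ) :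
    limitSet f ⊆ limitSet (X₁.restrict f) ∪ limitSet (X₂.restrict f) ∧
      (IsClosed X₁ → IsClosed X₂ →
        limitSet f = limitSet (X₁.restrict f) ∪ limitSet (X₂.restrict f)) := by
  have hsub := limitSet_subset_union f hcover
  refine ⟨hsub, fun h₁ h₂ => hsub.antisymm (union_subset ?_ ?_)⟩
  · exact limitSet_comp_subset_of_isClosedEmbedding f h₁.isClosedEmbedding_subtypeVal
  · exact limitSet_comp_subset_of_isClosedEmbedding f h₂.isClosedEmbedding_subtypeVal

/-- If `X = X₁ ∪ X₂` then `L(f) ⊆ L(f|X₁) ∪ L(f|X₂)`, with equality when both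
`X₁` and `X₂` are closed. -/
theorem limitSet_union
    {X Y : Type*} [TopologicalSpace X] [T2Space X] [SecondCountableTopology X]
    [LocallyCompactSpace X]
    [TopologicalSpace Y] [T2Space Y] [SecondCountableTopology Y] [LocallyCompactSpace Y]
    (f : X → Y) (hf : Continuous f) (X₁ X₂ : Set X) (hcover : X₁ ∪ X₂ = Set.univ) :
    limitSet f ⊆ limitSet (X₁.restrict f) ∪ limitSet (X₂.restrict f) ∧
      (IsClosed X₁ → IsClosed X₂ →
        limitSet f = limitSet (X₁.restrict f) ∪ limitSet (X₂.restrict f)) :=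
  limitSet_union_general f X₁ X₂ hcover
end

section
/- Let f : X → Y and f' : X' → Y' be continuous maps between Hausdorff, second-countable, locally compact topological spaces. Then L(f × f') = ( L(f) × cl(f'(X')) ) ∪ ( cl(f(X)) × L(f') ), where f × f' : X × X' → Y × Y' is the product map and cl denotes closure. -/
open Filter Topology Set

/-!
Let `(xₙ, x'ₙ)` have no cluster point in `X × X'` and `(f xₙ, f' x'ₙ) → (y, y')`. If `xₙ` has
no cluster point, `y ∈ L(f)`. Otherwise a subsequence `x_{φ n}` converges to some `p`, and then
`x'_{φ n}` has no cluster point `q`, as `(p, q)` would be one of the pair; so `y' ∈ L(f')`.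
Conversely, a sequence without cluster points paired with an arbitrary sequence has none either,
so a witness for `y ∈ L(f)` paired with a sequence `x'ₙ` with `f' x'ₙ → y'` witnesses
`(y, y') ∈ L(f × f')`.
-/

section ClusterPt

variable {α X X' : Type*} [TopologicalSpace X] [TopologicalSpace X'] {l : Filter α}

theorem Filter.Tendsto.prodMk_mapClusterPt {u : α → X} {v : α → X'} {p : X} {q : X'}
    (hu : Tendsto u l (𝓝 p)) (hv : MapClusterPt q l v) :
    MapClusterPt (p, q) l (fun a => (u a, v a)) := by
  rw [((𝓝 p).basis_sets.prod_nhds (𝓝 q).basis_sets).mapClusterPt_iff_frequently]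
  rintro ⟨s, t⟩ ⟨hs, ht⟩
  exact ((mapClusterPt_iff_frequently.1 hv t ht).and_eventually (hu hs)).mono
    fun _ h => ⟨h.2, h.1⟩

theorem not_mapClusterPt_prodMk_of_fst {u : α → X} (hu : ∀ p, ¬MapClusterPt p l u)
    (v : α → X') (p : X × X') : ¬MapClusterPt p l (fun a => (u a, v a)) :=
  fun hp => hu p.1 (hp.continuousAt_comp continuous_fst.continuousAt)

theorem not_mapClusterPt_prodMk_of_snd (u : α → X) {v : α → X'}
    (hv : ∀ q, ¬MapClusterPt q l v) (p : X × X') : ¬MapClusterPt p l (fun a => (u a, v a)) :=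
  fun hp => hv p.2 (hp.continuousAt_comp continuous_snd.continuousAt)

theorem exists_strictMono_forall_not_mapClusterPt_snd [FirstCountableTopology X]
    {u : ℕ → X × X'} (hu : ∀ p, ¬MapClusterPt p atTop u) {p : X}
    (hp : MapClusterPt p atTop (fun n => (u n).1)) :
    ∃ φ : ℕ → ℕ, StrictMono φ ∧ ∀ q, ¬MapClusterPt q atTop (fun n => (u (φ n)).2) := by
  obtain ⟨φ, hφ, hp⟩ := hp.tendsto_subseq
  exact ⟨φ, hφ, fun q hq =>
    hu (p, q) (.of_comp hφ.tendsto_atTop (hp.prodMk_mapClusterPt hq))⟩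

end ClusterPt

theorem exists_seq_tendsto_comp_of_mem_closure_range {X Y : Type*} [TopologicalSpace Y]
    [FrechetUrysohnSpace Y] {f : X → Y} {y : Y} (hy : y ∈ closure (range f)) :
    ∃ u : ℕ → X, Tendsto (f ∘ u) atTop (𝓝 y) := by
  obtain ⟨w, hw, hwy⟩ := mem_closure_iff_seq_limit.1 hy
  choose u hu using hw
  exact ⟨u, by simpa only [Function.comp_def, hu] using hwy⟩

section LimitSet

variable {X Y X' Y' : Type*} [TopologicalSpace X] [TopologicalSpace Y]
  [TopologicalSpace X'] [TopologicalSpace Y']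

theorem limitSet_subset_closure_range (f : X → Y) : limitSet f ⊆ closure (range f) :=
  fun _ ⟨_, _, hy⟩ => mem_closure_of_tendsto hy (.of_forall fun _ => mem_range_self _)

theorem limitSet_prod_map_subset [FirstCountableTopology X] (f : X → Y) (f' : X' → Y') :
    limitSet (Prod.map f f') ⊆
      limitSet f ×ˢ closure (range f') ∪ closure (range f) ×ˢ limitSet f' := by
  intro y hy
  have hcl : y ∈ closure (range f) ×ˢ closure (range f') := by
    rw [← closure_prod_eq, ← range_prodMap]
    exact limitSet_subset_closure_range _ hy
  obtain ⟨u, hu, hlim⟩ := hy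
  by_cases h : ∃ p, MapClusterPt p atTop (fun n => (u n).1)
  · obtain ⟨p, hp⟩ := h
    obtain ⟨φ, hφ, hnc⟩ := exists_strictMono_forall_not_mapClusterPt_snd hu hp
    exact Or.inr ⟨hcl.1, _, hnc, hlim.snd_nhds.comp hφ.tendsto_atTop⟩
  · push Not at h
    exact Or.inl ⟨⟨_, h, hlim.fst_nhds⟩, hcl.2⟩

theorem prod_subset_limitSet_prod_map [FrechetUrysohnSpace Y] [FrechetUrysohnSpace Y']
    (f : X → Y) (f' : X' → Y') :
    limitSet f ×ˢ closure (range f') ∪ closure (range f) ×ˢ limitSet f' ⊆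
      limitSet (Prod.map f f') := by
  rintro ⟨y, y'⟩ (⟨⟨u, hu, hy⟩, hy'⟩ | ⟨hy, ⟨v, hv, hy'⟩⟩)
  · obtain ⟨v, hy'⟩ := exists_seq_tendsto_comp_of_mem_closure_range hy'
    exact ⟨fun n => (u n, v n), not_mapClusterPt_prodMk_of_fst hu v, hy.prodMk_nhds hy'⟩
  · obtain ⟨u, hy⟩ := exists_seq_tendsto_comp_of_mem_closure_range hy
    exact ⟨fun n => (u n, v n), not_mapClusterPt_prodMk_of_snd u hv, hy.prodMk_nhds hy'⟩

end LimitSet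

theorem limitSet_prod_map_general
    {X Y X' Y' : Type*}
    [TopologicalSpace X] [SecondCountableTopology X]
    [TopologicalSpace Y] [SecondCountableTopology Y]
    [TopologicalSpace X']
    [TopologicalSpace Y'] [SecondCountableTopology Y']
    (f : X → Y) (f' : X' → Y') :
    limitSet (Prod.map f f') =
      (limitSet f) ×ˢ closure (Set.range f') ∪ closure (Set.range f) ×ˢ (limitSet f') :=
  (limitSet_prod_map_subset f f').antisymm (prod_subset_limitSet_prod_map f f')

/-- `L(f × f') = L(f) × cl(f'(X')) ∪ cl(f(X)) × L(f')`. -/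
theorem limitSet_prod_map
    {X Y X' Y' : Type*}
    [TopologicalSpace X] [T2Space X] [SecondCountableTopology X] [LocallyCompactSpace X]
    [TopologicalSpace Y] [T2Space Y] [SecondCountableTopology Y] [LocallyCompactSpace Y]
    [TopologicalSpace X'] [T2Space X'] [SecondCountableTopology X'] [LocallyCompactSpace X']
    [TopologicalSpace Y'] [T2Space Y'] [SecondCountableTopology Y'] [LocallyCompactSpace Y']
    (f : X → Y) (hf : Continuous f) (f' : X' → Y') (hf' : Continuous f') :
    limitSet (Prod.map f f') =
      (limitSet f) ×ˢ closure (Set.range f') ∪ closure (Set.range f) ×ˢ (limitSet f') :=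
  limitSet_prod_map_general f f'
end

section
/- Let f : X → Y and g : Y → Z be continuous maps between Hausdorff, second-countable, locally compact topological spaces. Then g(L(f)) ⊆ L(g ∘ f) ⊆ g(L(f)) ∪ L(g); in particular, if g is proper then L(g ∘ f) = g(L(f)). -/
open Filter Topology Set

/-- `g(L(f)) ⊆ L(g ∘ f) ⊆ g(L(f)) ∪ L(g)`; if `g` is proper then `L(g ∘ f) = g(L(f))`. -/
theorem limitSet_comp
    {X Y Z : Type*}
    [TopologicalSpace X] [T2Space X] [SecondCountableTopology X] [LocallyCompactSpace X]
    [TopologicalSpace Y] [T2Space Y] [SecondCountableTopology Y] [LocallyCompactSpace Y]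
    [TopologicalSpace Z] [T2Space Z] [SecondCountableTopology Z] [LocallyCompactSpace Z]
    (f : X → Y) (hf : Continuous f) (g : Y → Z) (hg : Continuous g) :
    g '' limitSet f ⊆ limitSet (g ∘ f) ∧
      limitSet (g ∘ f) ⊆ g '' limitSet f ∪ limitSet g ∧
      ((∀ C : Set Z, IsCompact C → IsCompact (g ⁻¹' C)) →
        limitSet (g ∘ f) = g '' limitSet f) := by
  have h1 : g '' limitSet f ⊆ limitSet (g ∘ f) := by
    rintro z ⟨y, ⟨u, hu, huy⟩, rfl⟩
    exact ⟨u, hu, (hg.tendsto y).comp huy⟩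
  have h2 : limitSet (g ∘ f) ⊆ g '' limitSet f ∪ limitSet g := by
    rintro z ⟨u, hu, huz⟩
    by_cases h : ∃ y, MapClusterPt y Filter.atTop (fun n => f (u n))
    · obtain ⟨y, hy⟩ := h
      obtain ⟨φ, hφ, hconv⟩ := TopologicalSpace.FirstCountableTopology.tendsto_subseq hy
      left
      refine ⟨y, ⟨u ∘ φ, fun p hp => hu p (hp.of_comp hφ.tendsto_atTop), hconv⟩, ?_⟩
      have hA : Filter.Tendsto (fun n => g (f (u (φ n)))) Filter.atTop (nhds (g y)) :=
        (hg.tendsto y).comp hconv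
      have hB : Filter.Tendsto (fun n => g (f (u (φ n)))) Filter.atTop (nhds z) :=
        huz.comp hφ.tendsto_atTop
      exact tendsto_nhds_unique hA hB
    · right
      exact ⟨fun n => f (u n), fun p hp => h ⟨p, hp⟩, huz⟩
  refine ⟨h1, h2, fun hproper => ?_⟩
  have hLg : limitSet g = (∅ : Set Z) := by
    ext z
    simp only [Set.mem_empty_iff_false, iff_false]
    rintro ⟨v, hv, hvz⟩
    obtain ⟨K, hK, hKz⟩ := exists_compact_mem_nhds z
    have hev : ∀ᶠ n in Filter.atTop, v n ∈ g ⁻¹' K := hvz hKz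
    have hle : Filter.map v Filter.atTop ≤ 𝓟 (g ⁻¹' K) := Filter.le_principal_iff.2 hev
    obtain ⟨p, _, hp⟩ := (hproper K hK).exists_mapClusterPt hle
    exact hv p hp
  refine Set.Subset.antisymm ?_ h1
  intro z hz
  rcases h2 hz with h | h
  · exact h
  · rw [hLg] at h
    exact absurd h (Set.notMem_empty z)
end

section
/- Let f : X → Y and g : Y → Z be continuous maps between Hausdorff, second-countable, locally compact topological spaces. If f is surjective, then L(g) ⊆ L(g ∘ f); if moreover f is surjective and proper, then L(g) = L(g ∘ f). In particular, if K is a nonempty compact space and pr : X × K → X is the projection, then L(g ∘ pr) = L(g) for every continuous g : X → Z. -/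
open Filter Topology Set

lemma limitSet_subset_comp {X Y Z : Type*} [TopologicalSpace X] [TopologicalSpace Y]
    [TopologicalSpace Z] (f : X → Y) (hf : Continuous f) (g : Y → Z)
    (hsurj : Function.Surjective f) : limitSet g ⊆ limitSet (g ∘ f) := by
  rintro z ⟨v, hv, hvz⟩
  choose u hu using fun n => hsurj (v n)
  refine ⟨u, ?_, ?_⟩
  · intro p hp
    have := hp.continuousAt_comp hf.continuousAt
    apply hv (f p)
    have heq : f ∘ u = v := funext hu
    rwa [heq] at this
  · simpa [Function.comp, hu] using hvz

lemma limitSet_comp_subset {X Y Z : Type*} [TopologicalSpace X] [TopologicalSpace Y]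
    [LocallyCompactSpace Y] [TopologicalSpace Z] (f : X → Y) (g : Y → Z)
    (hproper : ∀ C : Set Y, IsCompact C → IsCompact (f ⁻¹' C)) :
    limitSet (g ∘ f) ⊆ limitSet g := by
  rintro z ⟨u, hu, huz⟩
  refine ⟨fun n => f (u n), ?_, huz⟩
  intro q hq
  obtain ⟨C, hC, hCn⟩ := exists_compact_mem_nhds q
  have hfreq : ∃ᶠ n in atTop, u n ∈ f ⁻¹' C :=
    (mapClusterPt_iff_frequently.1 hq) C hCn
  have hne : (atTop ⊓ 𝓟 {n | u n ∈ f ⁻¹' C}).NeBot := frequently_iff_neBot.1 hfreq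
  have hle : map u (atTop ⊓ 𝓟 {n | u n ∈ f ⁻¹' C}) ≤ 𝓟 (f ⁻¹' C) := by
    rw [map_le_iff_le_comap]
    exact inf_le_right.trans (by simp [comap_principal, principal_mono]; intro a ha; exact ha)
  obtain ⟨x, -, hx⟩ := (hproper C hC).exists_clusterPt hle
  exact hu x (hx.mono (map_mono inf_le_left))

/-- If `f` is surjective then `L(g) ⊆ L(g ∘ f)`; if moreover `f` is proper then
`L(g) = L(g ∘ f)`.  In particular, for `K` nonempty compact and `pr : Y × K → Y`
the projection, `L(g ∘ pr) = L(g)`. -/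
theorem limitSet_comp_surjective
    {X Y Z : Type*}
    [TopologicalSpace X] [T2Space X] [SecondCountableTopology X] [LocallyCompactSpace X]
    [TopologicalSpace Y] [T2Space Y] [SecondCountableTopology Y] [LocallyCompactSpace Y]
    [TopologicalSpace Z] [T2Space Z] [SecondCountableTopology Z] [LocallyCompactSpace Z]
    (f : X → Y) (hf : Continuous f) (g : Y → Z) (hg : Continuous g)
    (hsurj : Function.Surjective f) :
    limitSet g ⊆ limitSet (g ∘ f) ∧
      ((∀ C : Set Y, IsCompact C → IsCompact (f ⁻¹' C)) → limitSet g = limitSet (g ∘ f)) ∧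
      (∀ (K : Type) [TopologicalSpace K] [T2Space K] [SecondCountableTopology K]
          [CompactSpace K] [Nonempty K],
        limitSet (fun p : Y × K => g p.1) = limitSet g) := by
  refine ⟨limitSet_subset_comp f hf g hsurj, fun hproper =>
    Subset.antisymm (limitSet_subset_comp f hf g hsurj)
      (limitSet_comp_subset f g hproper), ?_⟩
  intro K _ _ _ _ _
  have hsurj' : Function.Surjective (Prod.fst : Y × K → Y) :=
    fun y => ⟨(y, Classical.arbitrary K), rfl⟩
  have hproper' : ∀ C : Set Y, IsCompact C → IsCompact ((Prod.fst : Y × K → Y) ⁻¹' C) := by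
    intro C hC
    have h : (Prod.fst : Y × K → Y) ⁻¹' C = C ×ˢ (univ : Set K) := by
      ext p; simp
    rw [h]
    exact hC.prod isCompact_univ
  have h1 : limitSet g ⊆ limitSet (g ∘ (Prod.fst : Y × K → Y)) :=
    limitSet_subset_comp _ continuous_fst g hsurj'
  have h2 := limitSet_comp_subset (Prod.fst : Y × K → Y) g hproper'
  exact Subset.antisymm h2 h1
end

section
/- Let W be a compact Hausdorff, second-countable space, let X be a dense subset of W, let Y be a Hausdorff, second-countable, locally compact space, and let g : W → Y be a continuous map. Then the limit set of the restriction f = g|X satisfies L(f) = g(W \ X). -/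
open Filter Topology Set

/-- If `X` is dense in a compact space `W` and `f = g|X` for a continuous `g : W → Y`,
then `L(f) = g(W \ X)`. -/
theorem limitSet_dense_extension
    {W Y : Type*}
    [TopologicalSpace W] [T2Space W] [SecondCountableTopology W] [CompactSpace W]
    [TopologicalSpace Y] [T2Space Y] [SecondCountableTopology Y] [LocallyCompactSpace Y]
    (X : Set W) (hX : Dense X) (g : W → Y) (hg : Continuous g) :
    limitSet (X.restrict g) = g '' Xᶜ := by
  ext y
  constructor
  · rintro ⟨u, hu, hy⟩
    -- extract a convergent subsequence of the sequence in W
    obtain ⟨p, φ, hφ, hp⟩ := CompactSpace.tendsto_subseq (fun n => ((u n : W)))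
    have hpX : p ∉ X := by
      intro hpmem
      apply hu ⟨p, hpmem⟩
      apply MapClusterPt.of_comp hφ.tendsto_atTop
      have : Tendsto (u ∘ φ) atTop (𝓝 (⟨p, hpmem⟩ : X)) := by
        rw [tendsto_subtype_rng]
        exact hp
      exact this.mapClusterPt
    refine ⟨p, hpX, ?_⟩
    have h1 : Tendsto (fun n => g ((u (φ n) : W))) atTop (𝓝 y) :=
      hy.comp hφ.tendsto_atTop
    have h2 : Tendsto (fun n => g ((u (φ n) : W))) atTop (𝓝 (g p)) :=
      (hg.tendsto p).comp hp
    exact tendsto_nhds_unique h2 h1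
  · rintro ⟨p, hpX, rfl⟩
    have hpc : p ∈ closure X := hX p
    rw [mem_closure_iff_seq_limit] at hpc
    obtain ⟨u, huX, hu⟩ := hpc
    refine ⟨fun n => ⟨u n, huX n⟩, ?_, (hg.tendsto p).comp hu⟩
    rintro ⟨q, hq⟩ hcl
    have hclW : MapClusterPt q atTop u := by
      have := hcl.continuousAt_comp (f := (Subtype.val : X → W)) continuous_subtype_val.continuousAt
      exact this
    have : q = p := by
      have h1 : ClusterPt q (map u atTop) := hclW
      have h2 : map u atTop ≤ 𝓝 p := hu
      have : NeBot (𝓝 q ⊓ 𝓝 p) := by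
        haveI : NeBot (𝓝 q ⊓ map u atTop) := h1
        exact neBot_of_le (inf_le_inf_left _ h2)
      exact eq_of_nhds_neBot this
    exact hpX (this ▸ hq)
end

section
/- Let f : X → Y be a continuous map between Hausdorff, second-countable, locally compact spaces, and let Φ : Y × [0,1] → Z be a proper continuous map into a Hausdorff, second-countable, locally compact space Z. Then L(Φ ∘ (f × id_{[0,1]})) = Φ( L(f) × [0,1] ). -/
open Filter Topology Set

/-!
Taking a product with the identity of any space does not change the escaping sequences:
`L(f × id_T) = L(f) × T`, since a sequence `(xₙ, tₙ)` with `tₙ → t` clusters at `(p, t)` as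
soon as `xₙ` clusters at `p`. A continuous map `Φ` always sends `L(g)` into `L(Φ ∘ g)`; when `Φ`
is proper, conversely, a sequence with `Φ(g(wₙ)) → z` has `g(wₙ)` eventually in the compact
preimage of a compact neighbourhood of `z`, so a subsequence converges to some `y ∈ L(g)` with
`Φ y = z`.
-/

theorem MapClusterPt.prodMk_of_tendsto {ι A B : Type*} [TopologicalSpace A] [TopologicalSpace B]
    {l : Filter ι} {u : ι → A} {v : ι → B} {p : A} {t : B}
    (hu : MapClusterPt p l u) (hv : Tendsto v l (𝓝 t)) :
    MapClusterPt (p, t) l (fun n => (u n, v n)) := by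
  rw [mapClusterPt_iff_frequently] at hu ⊢
  intro s hs
  obtain ⟨s₁, hs₁, s₂, hs₂, hsub⟩ := mem_nhds_prod_iff.1 hs
  exact ((hu s₁ hs₁).and_eventually (hv.eventually_mem hs₂)).mono fun n hn => hsub ⟨hn.1, hn.2⟩

section LimitSet

variable {X Y Z T : Type*} [TopologicalSpace X] [TopologicalSpace Y] [TopologicalSpace Z]
  [TopologicalSpace T]

theorem limitSet_prodMap_id (f : X → Y) :
    limitSet (Prod.map f (id : T → T)) = limitSet f ×ˢ univ := by
  ext ⟨y, t⟩
  constructor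
  · rintro ⟨w, hw, htend⟩
    refine ⟨⟨fun n => (w n).1, fun p hp => hw (p, t) ?_, htend.fst_nhds⟩, trivial⟩
    exact hp.prodMk_of_tendsto htend.snd_nhds
  · rintro ⟨⟨u, hu, htend⟩, -⟩
    refine ⟨fun n => (u n, t), fun p hp => hu p.1 ?_, htend.prodMk_nhds tendsto_const_nhds⟩
    exact hp.continuousAt_comp continuous_fst.continuousAt

theorem image_limitSet_subset_limitSet_comp {g : X → Y} {Φ : Y → Z} (hΦ : Continuous Φ) :
    Φ '' limitSet g ⊆ limitSet (Φ ∘ g) := by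
  rintro _ ⟨y, ⟨u, hu, htend⟩, rfl⟩
  exact ⟨u, hu, (hΦ.tendsto y).comp htend⟩

theorem limitSet_comp_subset_image_limitSet [FirstCountableTopology Y] [LocallyCompactSpace Z]
    [T2Space Z] {g : X → Y} {Φ : Y → Z} (hΦ : Continuous Φ)
    (hproper : ∀ K : Set Z, IsCompact K → IsCompact (Φ ⁻¹' K)) :
    limitSet (Φ ∘ g) ⊆ Φ '' limitSet g := by
  rintro z ⟨w, hw, htend⟩
  obtain ⟨K, hK, hKz⟩ := exists_compact_mem_nhds z
  obtain ⟨y, -, φ, hφ, hy⟩ :=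
    (hproper K hK).tendsto_subseq' (htend.eventually_mem hKz).frequently
  have hΦy : Φ y = z :=
    tendsto_nhds_unique ((hΦ.tendsto y).comp hy) (htend.comp hφ.tendsto_atTop)
  exact ⟨y, ⟨w ∘ φ, fun p hp => hw p (hp.of_comp hφ.tendsto_atTop), hy⟩, hΦy⟩

theorem limitSet_comp_of_proper [FirstCountableTopology Y] [LocallyCompactSpace Z] [T2Space Z]
    {g : X → Y} {Φ : Y → Z} (hΦ : Continuous Φ)
    (hproper : ∀ K : Set Z, IsCompact K → IsCompact (Φ ⁻¹' K)) :
    limitSet (Φ ∘ g) = Φ '' limitSet g :=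
  (limitSet_comp_subset_image_limitSet hΦ hproper).antisymm
    (image_limitSet_subset_limitSet_comp hΦ)

end LimitSet

theorem limitSet_proper_homotopy_general
    {X Y Z : Type*}
    [TopologicalSpace X]
    [TopologicalSpace Y] [SecondCountableTopology Y]
    [TopologicalSpace Z] [T2Space Z] [LocallyCompactSpace Z]
    (f : X → Y)
    (Φ : Y × unitInterval → Z) (hΦ : Continuous Φ)
    (hproper : ∀ C : Set Z, IsCompact C → IsCompact (Φ ⁻¹' C)) :
    limitSet (fun p : X × unitInterval => Φ (f p.1, p.2)) =
      Φ '' ((limitSet f) ×ˢ (Set.univ : Set unitInterval)) := by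
  change limitSet (Φ ∘ Prod.map f id) = _
  rw [limitSet_comp_of_proper hΦ hproper, limitSet_prodMap_id]

/-- If `Φ : Y × [0,1] → Z` is a proper homotopy, then
`L(Φ ∘ (f × id)) = Φ(L(f) × [0,1])`. -/
theorem limitSet_proper_homotopy
    {X Y Z : Type*}
    [TopologicalSpace X] [T2Space X] [SecondCountableTopology X] [LocallyCompactSpace X]
    [TopologicalSpace Y] [T2Space Y] [SecondCountableTopology Y] [LocallyCompactSpace Y]
    [TopologicalSpace Z] [T2Space Z] [SecondCountableTopology Z] [LocallyCompactSpace Z]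
    (f : X → Y) (hf : Continuous f)
    (Φ : Y × unitInterval → Z) (hΦ : Continuous Φ)
    (hproper : ∀ C : Set Z, IsCompact C → IsCompact (Φ ⁻¹' C)) :
    limitSet (fun p : X × unitInterval => Φ (f p.1, p.2)) =
      Φ '' ((limitSet f) ×ˢ (Set.univ : Set unitInterval)) :=
  limitSet_proper_homotopy_general f Φ hΦ hproper
end

section
/- Let X and Y be smooth manifolds (finite-dimensional, Hausdorff, second countable, without boundary), with Y endowed with a metric d inducing its topology. Let A be a closed subset of X, let f : X → Y be a continuous map that is smooth on some neighborhood of A, and let ε : X → (0,1] be a continuous function. Then there exists a smooth map g : X → Y such that (i) d(f(x), g(x)) < ε(x) for all x ∈ X, (ii) g = f on some neighborhood of A, and (iii) g and f are equal at infinity. -/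
open Filter Topology Set Manifold

open Metric


theorem lemmaA {n d : ℕ} {X : Type*}
    [TopologicalSpace X] [T2Space X] [SecondCountableTopology X]
    [ChartedSpace (EuclideanSpace ℝ (Fin n)) X] [IsManifold (𝓡 n) (⊤ : ℕ∞) X]
    (F : X → EuclideanSpace ℝ (Fin d)) (hF : Continuous F)
    {T W : Set X} (hT : IsClosed T) (hW : IsOpen W) (hTW : T ⊆ W)
    (hFW : ContMDiffOn (𝓡 n) (𝓡 d) (⊤ : ℕ∞) F W)
    (δ : X → ℝ) (hδ : Continuous δ) (hδ0 : ∀ x, 0 < δ x) :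
    ∃ h : X → EuclideanSpace ℝ (Fin d), ContMDiff (𝓡 n) (𝓡 d) (⊤ : ℕ∞) h ∧
      (∀ x, ‖h x - F x‖ < δ x) ∧ ∃ W', IsOpen W' ∧ T ⊆ W' ∧ EqOn h F W' := by
  haveI : LocallyCompactSpace X := ChartedSpace.locallyCompactSpace (EuclideanSpace ℝ (Fin n)) X
  obtain ⟨W₁, hW₁o, hTW₁, hW₁W⟩ := normal_exists_closure_subset hT hW hTW
  set V : Option X → Set X :=
    fun o => o.elim W (fun x => {y | ‖F y - F x‖ < δ y / 2} \ closure W₁) with hV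
  have hVo : ∀ i, IsOpen (V i) := by
    rintro (_ | x)
    · exact hW
    · exact (isOpen_lt (by fun_prop) (by fun_prop)).sdiff isClosed_closure
  have hVcov : (univ : Set X) ⊆ ⋃ i, V i := by
    intro y _
    by_cases hy : y ∈ closure W₁
    · exact mem_iUnion.2 ⟨none, hW₁W hy⟩
    · exact mem_iUnion.2 ⟨some y, ⟨by simp [hδ0 y], hy⟩⟩
  obtain ⟨ρ, hρ⟩ := SmoothPartitionOfUnity.exists_isSubordinate (𝓡 n) isClosed_univ V hVo hVcov
  set c : Option X → X → EuclideanSpace ℝ (Fin d) :=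
    fun o => o.elim F (fun x _ => F x) with hc
  refine ⟨fun y => ∑ᶠ i, ρ i y • c i y, ?_, ?_, W₁, hW₁o, hTW₁, ?_⟩
  · refine ρ.contMDiff_finsum_smul fun i x hx => ?_
    cases i with
    | none => exact hFW.contMDiffAt (hW.mem_nhds (hρ none hx))
    | some z => exact contMDiffAt_const
  · intro y
    have hsum1 : ∑ i ∈ ρ.finsupport y, ρ i y = 1 := ρ.sum_finsupport y (mem_univ y)
    have hFy : F y = ∑ i ∈ ρ.finsupport y, ρ i y • F y := by
      rw [← Finset.sum_smul, hsum1, one_smul]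
    have hhy : (∑ᶠ i, ρ i y • c i y) = ∑ i ∈ ρ.finsupport y, ρ i y • c i y :=
      (ρ.sum_finsupport_smul_eq_finsum y c).symm
    have key : ∀ i ∈ ρ.finsupport y, ‖ρ i y • c i y - ρ i y • F y‖ ≤ ρ i y * (δ y / 2) := by
      intro i hi
      have hρy : ρ i y ≠ 0 := by simpa using (ρ.mem_finsupport y).1 hi
      have hyV : y ∈ V i := hρ i (subset_closure (by simpa using hρy))
      rw [← smul_sub, norm_smul, Real.norm_eq_abs, abs_of_nonneg (ρ.nonneg i y)]
      refine mul_le_mul_of_nonneg_left ?_ (ρ.nonneg i y)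
      cases i with
      | none => simp [hc, le_of_lt (half_pos (hδ0 y))]
      | some z =>
        have : ‖F y - F z‖ < δ y / 2 := hyV.1
        simpa [hc, norm_sub_rev (F y)] using this.le
    calc ‖(∑ᶠ i, ρ i y • c i y) - F y‖
        = ‖∑ i ∈ ρ.finsupport y, (ρ i y • c i y - ρ i y • F y)‖ := by
          rw [hhy, Finset.sum_sub_distrib, ← hFy]
      _ ≤ ∑ i ∈ ρ.finsupport y, ‖ρ i y • c i y - ρ i y • F y‖ := norm_sum_le _ _
      _ ≤ ∑ i ∈ ρ.finsupport y, ρ i y * (δ y / 2) := Finset.sum_le_sum key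
      _ = δ y / 2 := by rw [← Finset.sum_mul, hsum1, one_mul]
      _ < δ y := half_lt_self (hδ0 y)
  · intro y hy
    have hzero : ∀ z : X, ρ (some z) y = 0 := by
      intro z
      by_contra hne
      have : y ∈ V (some z) := hρ (some z) (subset_closure (by simpa using hne))
      exact this.2 (subset_closure hy)
    have h1 : ∑ᶠ i, ρ i y = ρ none y := finsum_eq_single _ none (fun o ho => by cases o with | none => exact absurd rfl ho | some z => exact hzero z)
    have h2 : ρ none y = 1 := by rw [← h1]; exact ρ.sum_eq_one (mem_univ y)
    have h3 : (∑ᶠ i, ρ i y • c i y) = ρ none y • c none y :=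
      finsum_eq_single _ none (fun o ho => by cases o with | none => exact absurd rfl ho | some z => simp [hzero z])
    show (∑ᶠ i, ρ i y • c i y) = F y
    rw [h3, h2]; simp [hc]

theorem depRecAux {α : Type*} (P : ℕ → α → Prop) (R : ℕ → α → α → Prop) (a0 : α)
    (h0 : P 0 a0) (hstep : ∀ k a, P k a → ∃ b, P (k + 1) b ∧ R k a b) :
    ∃ u : ℕ → α, u 0 = a0 ∧ (∀ k, P k (u k)) ∧ ∀ k, R k (u k) (u (k + 1)) := by
  choose! F hF1 hF2 using hstep
  let w : (k : ℕ) → {a : α // P k a} := fun k =>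
    Nat.rec ⟨a0, h0⟩ (fun k p => ⟨F k p.1, hF1 k p.1 p.2⟩) k
  refine ⟨fun k => (w k).1, rfl, fun k => (w k).2, fun k => ?_⟩
  exact hF2 k (w k).1 (w k).2

theorem escapeCompact {X : Type*} [TopologicalSpace X] (u : ℕ → X)
    (hu : ∀ p : X, ¬ MapClusterPt p Filter.atTop u) {C : Set X} (hC : IsCompact C) :
    ∀ᶠ m in Filter.atTop, u m ∉ C := by
  by_contra h
  rw [Filter.not_eventually] at h
  have hne : (Filter.map u Filter.atTop ⊓ Filter.principal C).NeBot := by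
    rw [Filter.inf_principal_neBot_iff]
    intro U hU
    have hU' : ∀ᶠ m in Filter.atTop, u m ∈ U := Filter.mem_map.1 hU
    rcases (h.and_eventually hU').exists with ⟨m, hm1, hm2⟩
    exact ⟨u m, hm2, not_not.1 hm1⟩
  obtain ⟨p, -, hp⟩ := hC.exists_clusterPt (f := Filter.map u Filter.atTop ⊓ Filter.principal C) inf_le_right
  exact hu p (hp.mono inf_le_left)


theorem lemmaC {n d : ℕ} {X Y : Type*}
    [TopologicalSpace X] [T2Space X] [SecondCountableTopology X]
    [ChartedSpace (EuclideanSpace ℝ (Fin n)) X] [IsManifold (𝓡 n) (⊤ : ℕ∞) X]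
    [MetricSpace Y] [SecondCountableTopology Y]
    [ChartedSpace (EuclideanSpace ℝ (Fin d)) Y] [IsManifold (𝓡 d) (⊤ : ℕ∞) Y]
    (g : X → Y) (hg : Continuous g)
    {D S : Set X} (hD : IsClosed D) (hS : IsOpen S) (hDS : D ⊆ S)
    (hgS : ContMDiffOn (𝓡 n) (𝓡 d) (⊤ : ℕ∞) g S)
    {L Ω : Set X} (hL : IsCompact L) (hΩ : IsOpen Ω) (hLΩ : L ⊆ Ω)
    (hΩc : IsCompact (closure Ω))
    (y : Y) (r : ℝ) (hr : 0 < r)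
    (hball : Metric.closedBall (extChartAt (𝓡 d) y y) r ⊆ (extChartAt (𝓡 d) y).target)
    (hgΩ : ∀ x ∈ closure Ω, g x ∈ (extChartAt (𝓡 d) y).source ∧
      extChartAt (𝓡 d) y (g x) ∈ Metric.ball (extChartAt (𝓡 d) y y) r)
    (η : X → ℝ) (hη : Continuous η) (hη0 : ∀ x, 0 < η x) :
    ∃ g' : X → Y, Continuous g' ∧
      (∃ S', IsOpen S' ∧ D ∪ L ⊆ S' ∧ ContMDiffOn (𝓡 n) (𝓡 d) (⊤ : ℕ∞) g' S') ∧
      (∀ x, dist (g x) (g' x) < η x) ∧ (∀ x ∉ Ω, g' x = g x) := by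
  haveI : LocallyCompactSpace X := ChartedSpace.locallyCompactSpace (EuclideanSpace ℝ (Fin n)) X
  classical
  rcases eq_empty_or_nonempty Ω with hΩe | hΩne
  · refine ⟨g, hg, ⟨S, hS, ?_, hgS⟩, fun x => by simpa using hη0 x, fun x _ => rfl⟩
    rw [union_subset_iff]; exact ⟨hDS, (hLΩ.trans hΩe.subset).trans (empty_subset S)⟩
  have hclne : (closure Ω).Nonempty := hΩne.closure
  set E := EuclideanSpace ℝ (Fin d)
  set φ : PartialEquiv Y E := extChartAt (𝓡 d) y with hφ
  set ctr : E := φ y with hctr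
  -- the cut-off function χ
  obtain ⟨χ, hχ0, hχ1, hχ01⟩ := exists_contMDiffMap_zero_one_nhds_of_isClosed (𝓡 n) (n := (⊤ : ℕ∞))
    (isClosed_compl_iff.2 hΩ) (hL.isClosed) (disjoint_compl_left_iff.2 hLΩ)
  obtain ⟨O₀, hO₀o, hΩO₀, hχO₀⟩ := mem_nhdsSet_iff_exists.1 hχ0
  obtain ⟨O₁, hO₁o, hLO₁, hχO₁⟩ := mem_nhdsSet_iff_exists.1 hχ1
  have hχO₀' : ∀ x ∈ O₀, χ x = 0 := fun x hx => hχO₀ hx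
  have hχO₁' : ∀ x ∈ O₁, χ x = 1 := fun x hx => hχO₁ hx
  set K : Set X := O₀ᶜ with hK
  have hKc : IsClosed K := isClosed_compl_iff.2 hO₀o
  have hKΩ : K ⊆ Ω := compl_subset_comm.1 hΩO₀
  have hχK : ∀ x ∉ K, χ x = 0 := fun x hx => hχO₀' x (not_not.1 hx)
  have hO₁K : O₁ ⊆ K := by
    intro x hx hx0
    have h1 := hχO₁' x hx
    rw [hχO₀' x hx0] at h1; norm_num at h1
  -- Tietze extension F of φ ∘ g from closure Ω
  have hφgc : Continuous fun z : closure Ω => φ (g (z : X)) := by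
    refine (continuousOn_extChartAt (I := 𝓡 d) y).comp_continuous
      (hg.comp continuous_subtype_val) fun z => (hgΩ z z.2).1
  obtain ⟨F, hFrestrict⟩ := ContinuousMap.exists_restrict_eq (Y := E)
    isClosed_closure ⟨_, hφgc⟩
  have hFeq : ∀ x ∈ closure Ω, F x = φ (g x) := by
    intro x hx
    have := congrFun (congrArg DFunLike.coe hFrestrict) ⟨x, hx⟩
    simpa using this
  have hFc : Continuous F := F.continuous
  -- the margin constant c
  have hζc : Continuous fun x => r - dist (F x) ctr := by fun_prop
  obtain ⟨x₀, hx₀mem, hx₀min⟩ := hΩc.exists_isMinOn hclne hζc.continuousOn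
  set c : ℝ := r - dist (F x₀) ctr with hc
  have hc0 : 0 < c := by
    have h2 := (hgΩ x₀ hx₀mem).2
    rw [← hFeq x₀ hx₀mem, Metric.mem_ball] at h2
    simp only [hc, sub_pos]
    exact h2
  have hcle : ∀ x ∈ closure Ω, dist (F x) ctr ≤ r - c := by
    intro x hx
    have h := hx₀min hx
    simp only [mem_setOf_eq] at h
    linarith
  -- min of η on closure Ω
  obtain ⟨xm, hxmmem, hxmmin⟩ := hΩc.exists_isMinOn hclne hη.continuousOn
  set m : ℝ := η xm with hm
  have hm0 : 0 < m := hη0 xm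
  have hmle : ∀ x ∈ closure Ω, m ≤ η x := by
    intro x hx
    have h := hxmmin hx
    simpa only [mem_setOf_eq] using h
  -- uniform continuity of ψ on the closed ball
  have hψc : ContinuousOn φ.symm φ.target := continuousOn_extChartAt_symm (I := 𝓡 d) y
  have hballcpt : IsCompact (Metric.closedBall ctr r) := isCompact_closedBall ctr r
  have hψu : UniformContinuousOn φ.symm (Metric.closedBall ctr r) :=
    hballcpt.uniformContinuousOn_of_continuous (hψc.mono hball)
  obtain ⟨δ₀, hδ₀0, hδ₀⟩ := (Metric.uniformContinuousOn_iff).1 hψu m hm0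
  -- apply lemmaA
  set δc : ℝ := min c δ₀ / 2 with hδc
  have hδc0 : 0 < δc := by positivity
  have hδclt : δc < min c δ₀ := by
    have : 0 < min c δ₀ := lt_min hc0 hδ₀0
    simpa [hδc] using half_lt_self this
  have hFW : ContMDiffOn (𝓡 n) (𝓡 d) (⊤ : ℕ∞) F (Ω ∩ S) := by
    have hbase : ContMDiffOn (𝓡 n) (𝓡 d) (⊤ : ℕ∞) (fun x => φ (g x)) (Ω ∩ S) := by
      refine ContMDiffOn.comp (I' := 𝓡 d) (contMDiffOn_extChartAt (n := ((⊤ : ℕ∞) : WithTop ℕ∞)))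
        (hgS.mono inter_subset_right) fun x hx => ?_
      rw [mem_preimage]
      have h1 := (hgΩ x (subset_closure hx.1)).1
      rwa [hφ, extChartAt_source] at h1
    exact hbase.congr fun x hx => hFeq x (subset_closure hx.1)
  obtain ⟨h, hhsm, hhF, W', hW'o, hTW', hhW'⟩ := lemmaA F hFc
    (hKc.inter hD) (hΩ.inter hS)
    (fun x hx => ⟨hKΩ hx.1, hDS hx.2⟩) hFW (fun _ => δc) continuous_const (fun _ => hδc0)
  -- the interpolation v and the new map g'
  set v : X → E := fun x => χ x • h x + (1 - χ x) • F x with hv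
  have hχc : Continuous fun x => χ x := χ.contMDiff.continuous
  have hhc : Continuous h := hhsm.continuous
  have hvc : Continuous v := by fun_prop
  have hvF : ∀ x, dist (v x) (F x) ≤ ‖h x - F x‖ := by
    intro x
    have : v x - F x = χ x • (h x - F x) := by
      simp only [hv]; module
    rw [dist_eq_norm, this, norm_smul, Real.norm_eq_abs,
      abs_of_nonneg (hχ01 x).1]
    exact mul_le_of_le_one_left (norm_nonneg _) (hχ01 x).2
  have hvFlt : ∀ x, dist (v x) (F x) < min c δ₀ := fun x =>
    lt_of_le_of_lt (hvF x) (lt_trans (hhF x) hδclt)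
  have hvball : ∀ x ∈ closure Ω, v x ∈ Metric.ball ctr r := by
    intro x hx
    have h1 : dist (v x) ctr ≤ dist (v x) (F x) + dist (F x) ctr := dist_triangle _ _ _
    have h2 : dist (v x) (F x) < c := lt_of_lt_of_le (hvFlt x) (min_le_left _ _)
    have h3 := hcle x hx
    simp only [Metric.mem_ball]
    linarith
  set g' : X → Y := fun x => if x ∈ Ω then φ.symm (v x) else g x with hg'
  -- g' = g off K
  have hg'g : ∀ x ∉ K, g' x = g x := by
    intro x hx
    by_cases hxΩ : x ∈ Ω
    · have hvx : v x = F x := by simp [hv, hχK x hx]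
      have : φ.symm (v x) = g x := by
        rw [hvx, hFeq x (subset_closure hxΩ)]
        exact φ.left_inv (by simpa only [hφ, extChartAt_source] using (hgΩ x (subset_closure hxΩ)).1)
      simp [hg', hxΩ, this]
    · simp [hg', hxΩ]
  have hg'Ω : ∀ x ∈ Ω, g' x = φ.symm (v x) := fun x hx => by simp [hg', hx]
  -- continuity of g'
  have hg'c : Continuous g' := by
    rw [continuous_iff_continuousAt]
    intro x
    by_cases hxΩ : x ∈ Ω
    · have hψv : ContinuousAt (fun z => φ.symm (v z)) x := by
        refine ContinuousAt.comp ?_ hvc.continuousAt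
        refine hψc.continuousAt ?_
        exact mem_of_superset (IsOpen.mem_nhds Metric.isOpen_ball
          (hvball x (subset_closure hxΩ))) ((Metric.ball_subset_closedBall).trans hball)
      exact hψv.congr (Filter.eventually_of_mem (hΩ.mem_nhds hxΩ) fun z hz => (hg'Ω z hz).symm)
    · have hxO₀ : x ∈ O₀ := not_not.1 fun hxK => hxΩ (hKΩ (not_not.1 fun h => hxK (by simpa [hK] using h)))
      refine hg.continuousAt.congr (Filter.eventually_of_mem (hO₀o.mem_nhds hxO₀) fun z hz => ?_)
      exact (hg'g z fun hzK => hzK hz).symm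
  -- smoothness on S'
  set S' : Set X := (S \ K) ∪ (W' ∩ Ω ∩ S) ∪ O₁ with hS'
  have hS'o : IsOpen S' := ((hS.sdiff hKc).union ((hW'o.inter hΩ).inter hS)).union hO₁o
  have hDLS' : D ∪ L ⊆ S' := by
    rintro x (hxD | hxL)
    · by_cases hxK : x ∈ K
      · exact Or.inl (Or.inr ⟨⟨hTW' ⟨hxK, hxD⟩, hKΩ hxK⟩, hDS hxD⟩)
      · exact Or.inl (Or.inl ⟨hDS hxD, hxK⟩)
    · exact Or.inr (hLO₁ hxL)
  have hg'S' : ContMDiffOn (𝓡 n) (𝓡 d) (⊤ : ℕ∞) g' S' := by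
    intro x hx
    have : ContMDiffAt (𝓡 n) (𝓡 d) (⊤ : ℕ∞) g' x := by
      rcases hx with (hx1 | hx2) | hx3
      · refine (hgS.contMDiffAt (hS.mem_nhds hx1.1)).congr_of_eventuallyEq ?_
        have hxO₀ : x ∈ O₀ := not_not.1 hx1.2
        exact Filter.eventually_of_mem (hO₀o.mem_nhds hxO₀) fun z hz => hg'g z fun hzK => hzK hz
      · refine (hgS.contMDiffAt (hS.mem_nhds hx2.2)).congr_of_eventuallyEq ?_
        refine Filter.eventually_of_mem ((((hW'o.inter hΩ).inter hS)).mem_nhds hx2) fun z hz => ?_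
        have hvz : v z = F z := by
          rw [hv]; simp only; rw [hhW' hz.1.1]; module
        rw [hg'Ω z hz.1.2, hvz, hFeq z (subset_closure hz.1.2)]
        exact φ.left_inv (by simpa only [hφ, extChartAt_source] using (hgΩ z (subset_closure hz.1.2)).1)
      · have hxΩ : x ∈ Ω := hKΩ (hO₁K hx3)
        have hψh : ContMDiffAt (𝓡 n) (𝓡 d) (⊤ : ℕ∞) (fun z => φ.symm (h z)) x := by
          refine ContMDiffAt.comp (I' := 𝓡 d) x ?_ hhsm.contMDiffAt
          refine (contMDiffOn_extChartAt_symm (n := ((⊤ : ℕ∞) : WithTop ℕ∞)) y).contMDiffAt ?_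
          refine mem_of_superset (IsOpen.mem_nhds Metric.isOpen_ball ?_) (Metric.ball_subset_closedBall.trans hball)
          have h1 : dist (h x) (F x) < c := by
            rw [dist_eq_norm]; exact lt_of_lt_of_le (lt_trans (hhF x) hδclt) (min_le_left _ _)
          have h2 := hcle x (subset_closure hxΩ)
          rw [Metric.mem_ball]
          calc dist (h x) ctr ≤ dist (h x) (F x) + dist (F x) ctr := dist_triangle _ _ _
            _ < r := by linarith
        refine hψh.congr_of_eventuallyEq ?_
        refine Filter.eventually_of_mem (hO₁o.mem_nhds hx3) fun z hz => ?_
        have hzΩ : z ∈ Ω := hKΩ (hO₁K hz)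
        have hvz : v z = h z := by rw [hv]; simp only; rw [hχO₁' z hz]; module
        rw [hg'Ω z hzΩ, hvz]
    exact this.contMDiffWithinAt
  -- the distance estimate
  have hdist : ∀ x, dist (g x) (g' x) < η x := by
    intro x
    by_cases hxK : x ∈ K
    · have hxΩ : x ∈ Ω := hKΩ hxK
      have hxcl : x ∈ closure Ω := subset_closure hxΩ
      have hgx : g x = φ.symm (F x) := by
        rw [hFeq x hxcl]
        exact (φ.left_inv (by simpa only [hφ, extChartAt_source] using (hgΩ x hxcl).1)).symm
      have hFball : F x ∈ Metric.closedBall ctr r := by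
        rw [Metric.mem_closedBall]
        have := hcle x hxcl; linarith [hc0]
      have hvball' : v x ∈ Metric.closedBall ctr r :=
        Metric.ball_subset_closedBall (hvball x hxcl)
      have hdFv : dist (F x) (v x) < δ₀ := by
        rw [dist_comm]; exact lt_of_lt_of_le (hvFlt x) (min_le_right _ _)
      have := hδ₀ (F x) hFball (v x) hvball' hdFv
      rw [hg'Ω x hxΩ, hgx]
      exact lt_of_lt_of_le this (hmle x hxcl)
    · rw [hg'g x hxK, dist_self]; exact hη0 x
  exact ⟨g', hg'c, ⟨S', hS'o, hDLS', hg'S'⟩, hdist, fun x hx => hg'g x fun hK' => hx (hKΩ hK')⟩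

/-- Let `X`, `Y` be smooth boundaryless manifolds, with `Y` metrized compatibly.  If
`f : X → Y` is continuous and smooth on a neighborhood of a closed set `A`, and
`ε : X → (0,1]` is continuous, then there is a smooth `ε`-approximation `g` of `f`
agreeing with `f` on a neighborhood of `A` and equal to `f` at infinity. -/
theorem smooth_approximation_rel_closed_set
    {n d : ℕ} {X Y : Type*}
    [TopologicalSpace X] [T2Space X] [SecondCountableTopology X]
    [ChartedSpace (EuclideanSpace ℝ (Fin n)) X] [IsManifold (𝓡 n) (⊤ : ℕ∞) X]
    [MetricSpace Y] [SecondCountableTopology Y]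
    [ChartedSpace (EuclideanSpace ℝ (Fin d)) Y] [IsManifold (𝓡 d) (⊤ : ℕ∞) Y]
    (A : Set X) (hA : IsClosed A)
    (f : X → Y) (hf : Continuous f)
    (U : Set X) (hU : IsOpen U) (hAU : A ⊆ U) (hfU : ContMDiffOn (𝓡 n) (𝓡 d) (⊤ : ℕ∞) f U)
    (ε : X → ℝ) (hε : Continuous ε) (hε01 : ∀ x, ε x ∈ Set.Ioc (0 : ℝ) 1) :
    ∃ g : X → Y, ContMDiff (𝓡 n) (𝓡 d) (⊤ : ℕ∞) g ∧
      (∀ x, dist (f x) (g x) < ε x) ∧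
      (∃ V : Set X, IsOpen V ∧ A ⊆ V ∧ Set.EqOn f g V) ∧
      (∀ u : ℕ → X, (∀ p : X, ¬ MapClusterPt p Filter.atTop u) →
        Filter.Tendsto (fun m => dist (f (u m)) (g (u m))) Filter.atTop (nhds 0)) := by
  classical
  haveI : LocallyCompactSpace X := ChartedSpace.locallyCompactSpace (EuclideanSpace ℝ (Fin n)) X
  have hε0 : ∀ x, 0 < ε x := fun x => (hε01 x).1
  -- separating neighborhoods of A
  obtain ⟨V₁, hV₁o, hAV₁, hV₁U⟩ := normal_exists_closure_subset hA hU hAU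
  obtain ⟨V₀, hV₀o, hAV₀, hV₀V₁⟩ := normal_exists_closure_subset hA hV₁o hAV₁
  set G : Set X := (closure V₀)ᶜ with hGdef
  have hGo : IsOpen G := isClosed_closure.isOpen_compl
  set sC : Set X := V₁ᶜ with hsCdef
  have hsCc : IsClosed sC := hV₁o.isClosed_compl
  have hsCG : sC ⊆ G := fun x hx hx0 => hx (hV₀V₁ hx0)
  -- the basis of good sets
  set q : Set X → Prop := fun Ω => IsOpen Ω ∧ IsCompact (closure Ω) ∧ Ω ⊆ G ∧
    ∃ (y : Y) (r s' : ℝ), 0 < r ∧ 0 < s' ∧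
      Metric.closedBall (extChartAt (𝓡 d) y y) r ⊆ (extChartAt (𝓡 d) y).target ∧
      ∀ z : Y, ∀ x' ∈ closure Ω, dist z (f x') < s' →
        z ∈ (extChartAt (𝓡 d) y).source ∧
          extChartAt (𝓡 d) y z ∈ Metric.ball (extChartAt (𝓡 d) y y) r with hqdef
  have hB : ∀ x ∈ sC, (𝓝 x).HasBasis (fun Ω : Set X => Ω ∈ 𝓝 x ∧ q Ω) id := by
    intro x hx
    refine Filter.hasBasis_self.2 fun N hN => ?_
    set y := f x with hy
    have htgt : (extChartAt (𝓡 d) y).target ∈ 𝓝 (extChartAt (𝓡 d) y y) :=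
      extChartAt_target_mem_nhds (I := 𝓡 d) y
    obtain ⟨t, ht0, htsub⟩ := Metric.nhds_basis_closedBall.mem_iff.1 htgt
    set Wb : Set Y := (extChartAt (𝓡 d) y).source ∩
      extChartAt (𝓡 d) y ⁻¹' (Metric.ball (extChartAt (𝓡 d) y y) (t/2)) with hWb
    have hWbo : IsOpen Wb :=
      (continuousOn_extChartAt (I := 𝓡 d) y).isOpen_inter_preimage
        (isOpen_extChartAt_source y) Metric.isOpen_ball
    have hyWb : y ∈ Wb := ⟨mem_extChartAt_source y, by
      simp only [mem_preimage, Metric.mem_ball, dist_self]; positivity⟩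
    obtain ⟨s', hs'0, hs'sub⟩ : ∃ s' > 0, Metric.ball y (2*s') ⊆ Wb := by
      obtain ⟨s'', hs''0, hsub⟩ := Metric.mem_nhds_iff.1 (hWbo.mem_nhds hyWb)
      refine ⟨s''/2, by positivity, fun z hz => hsub ?_⟩
      rw [Metric.mem_ball] at *
      linarith
    obtain ⟨Kx, hKxc, hKxn⟩ := exists_compact_mem_nhds x
    have hxG : x ∈ G := hsCG hx
    set Ω : Set X := interior Kx ∩ f ⁻¹' (Metric.ball y s') ∩ (G ∩ interior N) with hΩdef
    have hΩo : IsOpen Ω := ((isOpen_interior.inter (Metric.isOpen_ball.preimage hf)).inter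
      (hGo.inter isOpen_interior))
    have hxΩ : x ∈ Ω := ⟨⟨mem_interior_iff_mem_nhds.2 hKxn, by
        simp only [mem_preimage, Metric.mem_ball, ← hy, dist_self]; positivity⟩,
      hxG, mem_interior_iff_mem_nhds.2 hN⟩
    have hclKx : closure Ω ⊆ Kx :=
      closure_minimal (fun z hz => interior_subset hz.1.1) hKxc.isClosed
    have hfcl : ∀ x' ∈ closure Ω, dist (f x') y ≤ s' := by
      intro x' hx'
      have h1 : closure Ω ⊆ closure (f ⁻¹' Metric.ball y s') :=
        closure_mono (fun z hz => hz.1.2)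
      have h2 : closure (f ⁻¹' Metric.ball y s') ⊆ f ⁻¹' closure (Metric.ball y s') :=
        hf.closure_preimage_subset _
      have h3 := h2 (h1 hx')
      rw [mem_preimage] at h3
      have h4 : closure (Metric.ball y s') ⊆ Metric.closedBall y s' := closure_ball_subset_closedBall
      exact h4 h3
    refine ⟨Ω, hΩo.mem_nhds hxΩ, ⟨hΩo, ?_, fun z hz => hz.2.1, y, t/2, s', by positivity, hs'0,
      (Metric.closedBall_subset_closedBall (by linarith)).trans htsub, ?_⟩,
      fun z hz => interior_subset hz.2.2⟩
    · exact hKxc.of_isClosed_subset isClosed_closure hclKx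
    · intro z x' hx' hdz
      have h5 : z ∈ Metric.ball y (2*s') := by
        rw [Metric.mem_ball]
        calc dist z y ≤ dist z (f x') + dist (f x') y := dist_triangle _ _ _
          _ < s' + s' := add_lt_add_of_lt_of_le hdz (hfcl x' hx')
          _ = 2 * s' := by ring
      exact hs'sub h5
  -- locally finite refinement
  obtain ⟨α, cpt, Ωa, hpa, hcov, hfin⟩ :=
    refinement_of_locallyCompact_sigmaCompact_of_nhds_basis_set
      (ι := fun _ : X => Set X) (B := fun _ => id) hsCc hB
  have hΩnhds : ∀ a, Ωa a ∈ 𝓝 (cpt a) := fun a => (hpa a).2.1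
  have hΩo : ∀ a, IsOpen (Ωa a) := fun a => (hpa a).2.2.1
  have hΩcpt : ∀ a, IsCompact (closure (Ωa a)) := fun a => (hpa a).2.2.2.1
  have hΩG : ∀ a, Ωa a ⊆ G := fun a => (hpa a).2.2.2.2.1
  have hchart := fun a => (hpa a).2.2.2.2.2
  choose ya ra sa hra hsa hballa hconda using hchart
  -- shrink to compact sets La
  obtain ⟨La, hcovL, hLclosed, hLsub⟩ := exists_subset_iUnion_closed_subset hsCc hΩo
    (fun x _ => hfin.point_finite x) hcov
  have hLcpt : ∀ a, IsCompact (La a) :=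
    fun a => (hΩcpt a).of_isClosed_subset (hLclosed a) ((hLsub a).trans subset_closure)
  -- countability and enumeration
  have hΩne : ∀ a, (Ωa a).Nonempty := fun a => ⟨cpt a, mem_of_mem_nhds (hΩnhds a)⟩
  haveI : Countable α := Set.countable_univ_iff.1 (hfin.countable_univ hΩne)
  obtain ⟨inj, hinj⟩ := exists_injective_nat α
  set dec : ℕ → Option α := fun k => if h : ∃ a, inj a = k then some h.choose else none with hdecdef
  have hdecinj : ∀ a, dec (inj a) = some a := by
    intro a
    have hex : ∃ b, inj b = inj a := ⟨a, rfl⟩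
    simp only [hdecdef, dif_pos hex]
    exact congrArg some (hinj hex.choose_spec)
  have hdecsome : ∀ k a, dec k = some a → inj a = k := by
    intro k a h
    by_cases hex : ∃ b, inj b = k
    · simp only [hdecdef, dif_pos hex] at h
      rw [← Option.some_inj.1 h]
      exact hex.choose_spec
    · simp only [hdecdef, dif_neg hex] at h
      exact absurd h (by simp)
  -- compact exhaustion and the ring cover O
  set K : CompactExhaustion X := CompactExhaustion.choice X with hKdef
  set Kpred : ℕ → Set X := fun i => Nat.rec ∅ (fun j _ => K j) i with hKpred
  have hKpredclosed : ∀ i, IsClosed (Kpred i) := by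
    intro i
    cases i with
    | zero => exact isClosed_empty
    | succ j => exact (K.isCompact j).isClosed
  set O : ℕ → Set X := fun i => interior (K (i+1)) \ Kpred i with hOdef
  have hOo : ∀ i, IsOpen (O i) := fun i => isOpen_interior.sdiff (hKpredclosed i)
  have hOcov : ∀ x : X, ∃ i, x ∈ O i := by
    intro x
    refine ⟨K.find x, K.subset_interior_succ _ (K.mem_find x), ?_⟩
    cases hnf : K.find x with
    | zero => simp [hKpred]
    | succ j =>
      simp only [hKpred]
      intro hmem
      have := K.mem_iff_find_le.1 hmem
      omega
  have hOKsub : ∀ i, closure (O i) ⊆ K (i+1) :=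
    fun i => closure_minimal (fun z hz => interior_subset hz.1) (K.isCompact _).isClosed
  have hOclcpt : ∀ i, IsCompact (closure (O i)) :=
    fun i => (K.isCompact (i+1)).of_isClosed_subset isClosed_closure (hOKsub i)
  have hOfin : LocallyFinite O := by
    intro x
    refine ⟨interior (K (K.find x + 1)),
      isOpen_interior.mem_nhds (K.subset_interior_succ _ (K.mem_find x)), ?_⟩
    refine Set.Finite.subset (Set.finite_le_nat (K.find x + 1)) ?_
    rintro i ⟨z, hzO, hzK⟩
    simp only [mem_setOf_eq]
    by_contra hi
    simp only [not_le] at hi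
    obtain ⟨j, rfl⟩ : ∃ j, i = j + 1 := ⟨i - 1, by omega⟩
    refine hzO.2 ?_
    simp only [hKpred]
    exact K.subset (by omega : K.find x + 1 ≤ j) (interior_subset hzK)
  have hOcovU : (univ : Set X) ⊆ ⋃ i, O i := fun x _ => mem_iUnion.2 (hOcov x)
  obtain ⟨ρpu, hρsub⟩ :=
    SmoothPartitionOfUnity.exists_isSubordinate (𝓡 n) isClosed_univ O hOo hOcovU
  -- the coefficients ci
  have hcE : ∀ i, ∃ ci : ℝ, 0 < ci ∧ ∀ x ∈ closure (O i), ci ≤ ε x := by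
    intro i
    rcases eq_empty_or_nonempty (closure (O i)) with he | hne
    · exact ⟨1, one_pos, by simp [he]⟩
    · obtain ⟨x₀, hx₀, hmin⟩ := (hOclcpt i).exists_isMinOn hne hε.continuousOn
      exact ⟨ε x₀, hε0 x₀, fun x hx => by simpa only [mem_setOf_eq] using hmin hx⟩
  have hcS : ∀ i, ∃ ci : ℝ, 0 < ci ∧ ∀ a, (closure (Ωa a) ∩ O i).Nonempty → ci ≤ sa a := by
    intro i
    have hfinT : {a | (closure (Ωa a) ∩ closure (O i)).Nonempty}.Finite :=
      (hfin.closure).finite_nonempty_inter_compact (hOclcpt i)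
    rcases hfinT.toFinset.eq_empty_or_nonempty with he | hne
    · refine ⟨1, one_pos, fun a ha => ?_⟩
      exfalso
      have haT : a ∈ hfinT.toFinset := by
        rw [Set.Finite.mem_toFinset]
        exact ha.mono (inter_subset_inter_right _ subset_closure)
      rw [he] at haT
      exact absurd haT (Finset.notMem_empty a)
    · set mm := (hfinT.toFinset.image sa).min' (hne.image sa) with hmm
      have hm0 : 0 < mm := by
        obtain ⟨v, hv, hvm⟩ := Finset.mem_image.1 ((hfinT.toFinset.image sa).min'_mem (hne.image sa))
        rw [hmm, ← hvm]
        exact hsa v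
      refine ⟨mm, hm0, fun a ha => Finset.min'_le _ _ (Finset.mem_image_of_mem sa ?_)⟩
      rw [Set.Finite.mem_toFinset]
      exact ha.mono (inter_subset_inter_right _ subset_closure)
  choose cE hcE0 hcEε using hcE
  choose cS hcS0 hcSs using hcS
  set ci : ℕ → ℝ := fun i => min (min (cE i) (cS i)) ((1/2 : ℝ)^i) with hcidef
  have hci0 : ∀ i, 0 < ci i := fun i => lt_min (lt_min (hcE0 i) (hcS0 i)) (by positivity)
  set ρ : X → ℝ := fun x => ∑ᶠ i, ρpu i x • ci i with hρdef
  have hρeq : ∀ x, ρ x = ∑ i ∈ ρpu.finsupport x, ρpu i x • ci i :=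
    fun x => (ρpu.sum_finsupport_smul_eq_finsum x (fun i _ => ci i)).symm
  have hρc : Continuous ρ := by
    refine continuous_finsum (fun i => ((ρpu i).contMDiff.continuous).smul continuous_const) ?_
    refine ρpu.locallyFinite.subset fun i z hz => ?_
    simp only [Function.mem_support] at hz ⊢
    intro h0
    apply hz
    rw [h0, zero_smul]
  have hbound : ∀ (x : X) (b : ℝ), 0 ≤ b → (∀ i, ρpu i x ≠ 0 → ci i ≤ b) → ρ x ≤ b := by
    intro x b hb hib
    rw [hρeq x]
    calc ∑ i ∈ ρpu.finsupport x, ρpu i x • ci i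
        ≤ ∑ i ∈ ρpu.finsupport x, ρpu i x * b := by
          refine Finset.sum_le_sum fun i hi => ?_
          rw [smul_eq_mul]
          refine mul_le_mul_of_nonneg_left (hib i ?_) (ρpu.nonneg i x)
          simpa using (ρpu.mem_finsupport x).1 hi
      _ = b := by rw [← Finset.sum_mul, ρpu.sum_finsupport x (mem_univ x), one_mul]
  have hmemO : ∀ (i) (x : X), ρpu i x ≠ 0 → x ∈ O i := by
    intro i x hx
    exact hρsub i (subset_closure (by simpa using hx))
  have hρε : ∀ x, ρ x ≤ ε x := by
    intro x
    refine hbound x (ε x) (hε0 x).le fun i hi => ?_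
    refine le_trans (le_trans (min_le_left _ _) (min_le_left _ _)) ?_
    exact hcEε i x (subset_closure (hmemO i x hi))
  have hρsa : ∀ a, ∀ x ∈ closure (Ωa a), ρ x ≤ sa a := by
    intro a x hx
    refine hbound x (sa a) (hsa a).le fun i hi => ?_
    refine le_trans (le_trans (min_le_left _ _) (min_le_right _ _)) ?_
    exact hcSs i a ⟨x, hx, hmemO i x hi⟩
  have hρdecay : ∀ (N : ℕ) (x : X), x ∉ K (N+1) → ρ x ≤ (1/2 : ℝ)^N := by
    intro N x hx
    refine hbound x _ (by positivity) fun i hi => ?_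
    have hxO := hmemO i x hi
    have hiN : N + 1 ≤ i := by
      by_contra hiN
      push_neg at hiN
      exact hx (K.subset (by omega : i + 1 ≤ N + 1) (interior_subset hxO.1))
    refine le_trans (min_le_right _ _) ?_
    exact pow_le_pow_of_le_one (by norm_num) (by norm_num) (by omega)
  have hρ0 : ∀ x, 0 < ρ x := by
    intro x
    obtain ⟨i, hi⟩ := ρpu.exists_pos_of_mem (mem_univ x)
    rw [hρeq x]
    refine lt_of_lt_of_le (show (0:ℝ) < ρpu i x • ci i from smul_pos hi (hci0 i)) ?_
    refine Finset.single_le_sum (fun j _ => smul_nonneg (ρpu.nonneg j x) (hci0 j).le) ?_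
    rw [ρpu.mem_finsupport]
    simpa using ne_of_gt hi
  -- the inductive construction
  set Dk : ℕ → Set X := fun k => closure V₁ ∪ ⋃ (a : α) (_ : inj a < k), La a with hDkdef
  have hDkclosed : ∀ k, IsClosed (Dk k) := by
    intro k
    refine isClosed_closure.union ?_
    have hfinset : {a : α | inj a < k}.Finite := by
      have : {a : α | inj a < k} ⊆ inj ⁻¹' {m | m < k} := fun a ha => ha
      exact Set.Finite.subset (Set.Finite.preimage hinj.injOn (Set.finite_lt_nat k)) this
    exact hfinset.isClosed_biUnion fun a _ => hLclosed a
  set Good : ℕ → ((X → Y) × Set X) → Prop := fun k p =>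
    Continuous p.1 ∧ IsOpen p.2 ∧ Dk k ⊆ p.2 ∧ ContMDiffOn (𝓡 n) (𝓡 d) (⊤ : ℕ∞) p.1 p.2 ∧
      ∀ x, dist (f x) (p.1 x) ≤ (1 - (1/2 : ℝ)^k) * (ρ x / 2) with hGooddef
  set OmegaK : ℕ → Set X := fun k => (dec k).elim ∅ Ωa with hOmegaKdef
  set Rel : ℕ → ((X → Y) × Set X) → ((X → Y) × Set X) → Prop := fun k p p' =>
    ∀ x, x ∉ OmegaK k → p'.1 x = p.1 x with hReldef
  have hGood0 : Good 0 (f, U) := by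
    refine ⟨hf, hU, ?_, hfU, fun x => by simp⟩
    refine union_subset hV₁U ?_
    simp
  have hstep : ∀ k p, Good k p → ∃ p', Good (k+1) p' ∧ Rel k p p' := by
    intro k p hp
    obtain ⟨hpc, hpo, hpD, hpsm, hpdist⟩ := hp
    have hDk1 : ∀ (hnone : dec k = none), Dk (k+1) = Dk k := by
      intro hnone
      have hne : ∀ a : α, inj a ≠ k := by
        intro a ha
        rw [← ha, hdecinj a] at hnone
        exact absurd hnone (by simp)
      simp only [hDkdef]
      congr 1
      ext z
      simp only [mem_iUnion]
      constructor
      · rintro ⟨a, hak, haz⟩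
        exact ⟨a, by have := hne a; omega, haz⟩
      · rintro ⟨a, hak, haz⟩
        exact ⟨a, by omega, haz⟩
    rcases hdk : dec k with _ | a
    · refine ⟨p, ⟨hpc, hpo, by rw [hDk1 hdk]; exact hpD, hpsm, fun x => ?_⟩, fun x _ => rfl⟩
      refine le_trans (hpdist x) ?_
      have h1 : (0:ℝ) ≤ ρ x / 2 := by linarith [hρ0 x]
      have h2 : (1 - (1/2:ℝ)^k) ≤ (1 - (1/2:ℝ)^(k+1)) := by
        have : (1/2:ℝ)^(k+1) ≤ (1/2:ℝ)^k :=
          pow_le_pow_of_le_one (by norm_num) (by norm_num) (by omega)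
        linarith
      exact mul_le_mul_of_nonneg_right h2 h1
    · have hinjak : inj a = k := hdecsome k a hdk
      have hgcl : ∀ x ∈ closure (Ωa a),
          p.1 x ∈ (extChartAt (𝓡 d) (ya a)).source ∧
          extChartAt (𝓡 d) (ya a) (p.1 x) ∈
            Metric.ball (extChartAt (𝓡 d) (ya a) (ya a)) (ra a) := by
        intro x hx
        refine hconda a (p.1 x) x hx ?_
        have h1 := hpdist x
        have h2 := hρsa a x hx
        have h3 := hρ0 x
        have h4 := hsa a
        have h5 : (0:ℝ) ≤ (1/2:ℝ)^k := by positivity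
        have h6 : (1 - (1/2:ℝ)^k) * (ρ x / 2) ≤ ρ x / 2 := by nlinarith
        rw [dist_comm]
        calc dist (f x) (p.1 x) ≤ ρ x / 2 := le_trans h1 h6
          _ ≤ sa a / 2 := by linarith
          _ < sa a := by linarith
      obtain ⟨g', hg'c, ⟨S', hS'o, hS'sub, hg'sm⟩, hg'dist, hg'off⟩ :=
        lemmaC p.1 hpc (hDkclosed k) hpo hpD hpsm (hLcpt a) (hΩo a) (hLsub a) (hΩcpt a)
          (ya a) (ra a) (hra a) (hballa a) hgcl
          (fun x => (1/2:ℝ)^(k+2) * ρ x) (continuous_const.mul hρc)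
          (fun x => by have := hρ0 x; positivity)
      refine ⟨(g', S'), ⟨hg'c, hS'o, ?_, hg'sm, fun x => ?_⟩, fun x hx => ?_⟩
      · intro x hx
        apply hS'sub
        rcases hx with h | h
        · exact Or.inl (Or.inl h)
        · rcases mem_iUnion₂.1 h with ⟨b, hbk, hbL⟩
          rcases Nat.lt_succ_iff_lt_or_eq.1 hbk with hbk' | hbk'
          · exact Or.inl (Or.inr (mem_iUnion₂.2 ⟨b, hbk', hbL⟩))
          · have : b = a := by
              have h1 : dec (inj b) = some b := hdecinj b
              rw [hbk', hdk] at h1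
              exact (Option.some_inj.1 h1).symm
            rw [this] at hbL
            exact Or.inr hbL
      · have h1 := hpdist x
        have h2 := le_of_lt (hg'dist x)
        have h3 := dist_triangle (f x) (p.1 x) (g' x)
        have h4 : dist (f x) (g' x) ≤ (1 - (1/2:ℝ)^k) * (ρ x / 2) + (1/2:ℝ)^(k+2) * ρ x := by
          calc dist (f x) (g' x) ≤ dist (f x) (p.1 x) + dist (p.1 x) (g' x) := h3
            _ ≤ _ := add_le_add h1 h2
        calc dist (f x) (g' x) ≤ (1 - (1/2:ℝ)^k) * (ρ x / 2) + (1/2:ℝ)^(k+2) * ρ x := h4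
          _ = (1 - (1/2:ℝ)^(k+1)) * (ρ x / 2) := by rw [pow_succ, pow_succ]; ring
      · refine hg'off x ?_
        simp only [hOmegaKdef, hdk, Option.elim] at hx
        exact hx
  obtain ⟨w, hw0, hwGood, hwRel⟩ := depRecAux Good Rel (f, U) hGood0 hstep
  set gk : ℕ → X → Y := fun k => (w k).1 with hgkdef
  -- local stabilization
  have hstabset : ∀ x : X, ∃ Nx ∈ 𝓝 x, {a | (Ωa a ∩ Nx).Nonempty}.Finite := fun x => hfin x
  choose Nx hNx hNxfin using hstabset
  set mdx : X → ℕ := fun x => ((hNxfin x).toFinset.sup fun a => inj a + 1) with hmdx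
  have hstab : ∀ x, ∀ z ∈ Nx x, ∀ j k, mdx x ≤ j → j ≤ k → gk k z = gk j z := by
    intro x z hz j k hmj
    induction k with
    | zero =>
      intro hjk
      have hj0 : j = 0 := by omega
      rw [hj0]
    | succ k ih =>
      intro hjk
      by_cases hjk' : j ≤ k
      · rw [← ih hjk']
        refine hwRel k z ?_
        intro hzO
        rcases hdk : dec k with _ | a
        · rw [hOmegaKdef] at hzO
          simp only [hdk, Option.elim, mem_empty_iff_false] at hzO
        · have hza : z ∈ Ωa a := by
            rw [hOmegaKdef] at hzO
            simpa only [hdk, Option.elim] using hzO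
          have ha : a ∈ (hNxfin x).toFinset := by
            rw [Set.Finite.mem_toFinset]
            exact ⟨z, hza, hz⟩
          have hle : inj a + 1 ≤ mdx x := Finset.le_sup (f := fun b => inj b + 1) ha
          have hik : inj a = k := hdecsome k a hdk
          omega
      · have hj : j = k + 1 := by omega
        rw [hj]
  set g : X → Y := fun x => gk (mdx x) x with hgdef
  have hgeq : ∀ x, ∀ z ∈ Nx x, ∀ k, mdx x ≤ k → g z = gk k z := by
    intro x z hz k hk
    have hzz : z ∈ Nx z := mem_of_mem_nhds (hNx z)
    set K0 := max k (max (mdx z) (mdx x)) with hK0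
    have h1 : gk K0 z = gk (mdx z) z :=
      hstab z z hzz (mdx z) K0 le_rfl (le_trans (le_max_left _ _) (le_max_right _ _))
    have h2 : gk K0 z = gk k z := hstab x z hz k K0 hk (le_max_left _ _)
    simp only [hgdef]
    rw [← h1, h2]
  -- smoothness of g
  have hsmooth : ContMDiff (𝓡 n) (𝓡 d) (⊤ : ℕ∞) g := by
    intro x
    have hcore : ∃ k0, mdx x ≤ k0 ∧ x ∈ Dk k0 := by
      by_cases hxV : x ∈ closure V₁
      · exact ⟨mdx x, le_rfl, Or.inl hxV⟩
      · have hxs : x ∈ sC := fun hxV₁ => hxV (subset_closure hxV₁)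
        obtain ⟨a, ha⟩ := mem_iUnion.1 (hcovL hxs)
        refine ⟨max (mdx x) (inj a + 1), le_max_left _ _, Or.inr ?_⟩
        exact mem_iUnion₂.2 ⟨a, by omega, ha⟩
    obtain ⟨k0, hk0le, hk0D⟩ := hcore
    obtain ⟨hc', ho', hD', hsm', hd'⟩ := hwGood k0
    have h1 : ContMDiffAt (𝓡 n) (𝓡 d) (⊤ : ℕ∞) (gk k0) x :=
      hsm'.contMDiffAt (ho'.mem_nhds (hD' hk0D))
    refine h1.congr_of_eventuallyEq ?_
    exact Filter.eventually_of_mem (hNx x) fun z hz => hgeq x z hz k0 hk0le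
  have hfg : ∀ x, dist (f x) (g x) ≤ ρ x / 2 := by
    intro x
    have h1 := (hwGood (mdx x)).2.2.2.2 x
    have h2 : (0:ℝ) ≤ (1/2:ℝ)^(mdx x) := by positivity
    have h3 := hρ0 x
    have h4 : (1 - (1/2:ℝ)^(mdx x)) * (ρ x / 2) ≤ ρ x / 2 := by nlinarith
    exact le_trans h1 h4
  have hlt : ∀ x, dist (f x) (g x) < ε x := by
    intro x
    have h1 := hρ0 x
    have h2 := hρε x
    have h3 := hfg x
    linarith
  have hfk : ∀ k, ∀ z ∈ closure V₀, gk k z = f z := by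
    intro k
    induction k with
    | zero =>
      intro z _
      show (w 0).1 z = f z
      rw [hw0]
    | succ k ih =>
      intro z hz
      rw [← ih z hz]
      refine hwRel k z ?_
      intro hzO
      rcases hdk : dec k with _ | a
      · rw [hOmegaKdef] at hzO
        simp only [hdk, Option.elim, mem_empty_iff_false] at hzO
      · have hza : z ∈ Ωa a := by
          rw [hOmegaKdef] at hzO
          simpa only [hdk, Option.elim] using hzO
        exact (hΩG a hza) hz
  have hEq : Set.EqOn f g V₀ := by
    intro z hz
    exact (hfk (mdx z) z (subset_closure hz)).symm
  refine ⟨g, hsmooth, hlt, ⟨V₀, hV₀o, hAV₀, hEq⟩, ?_⟩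
  intro u hu
  rw [Metric.tendsto_atTop]
  intro ι hι
  obtain ⟨N₁, hN₁⟩ := exists_pow_lt_of_lt_one hι (by norm_num : (1/2 : ℝ) < 1)
  have hesc := escapeCompact u hu (K.isCompact (N₁+1))
  rw [Filter.eventually_atTop] at hesc
  obtain ⟨M, hM⟩ := hesc
  refine ⟨M, fun m hm => ?_⟩
  have h1 := hρdecay N₁ (u m) (hM m hm)
  have h2 := hfg (u m)
  have h3 : (0:ℝ) ≤ dist (f (u m)) (g (u m)) := dist_nonneg
  have h4 : (0:ℝ) < (1/2:ℝ)^N₁ := by positivity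
  rw [Real.dist_eq, sub_zero, abs_of_nonneg h3]
  linarith
end
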